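/- arXiv:1903.05373 — 3 statements merged into one kernel-verified Lean document; each statement's English description precedes it below -/
import Mathlib

section
/- Let ρ ∈ M_{d1} ⊗ ⋯ ⊗ M_{dn} be a Hermitian matrix with operator Schmidt rank (minimal bond dimension of a matrix product operator decomposition with arbitrary complex local matrices) equal to D. Then ρ admits a matrix product decomposition with Hermitian local matrices of bond dimension at most 2^{n−1} D; i.e. hosr(ρ) ≤ 2^{n−1} osr(ρ). Moreover, osr(ρ) ≤ hosr(ρ), and for n = 2 one has hosr(ρ) = osr(ρ). -/
open scoped Kronecker ComplexOrder
open Matrix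

/-- The matrix-product (MPO) expression for a multipartite matrix on
`n + 2` sites (one first site, `n` middle sites, one last site) with bond
dimension `D`. -/
noncomputable def mpoSum (n d0 dl D : ℕ) (d : Fin n → ℕ)
    (A0 : Fin D → Matrix (Fin d0) (Fin d0) ℂ)
    (Am : (i : Fin n) → Fin D → Fin D → Matrix (Fin (d i)) (Fin (d i)) ℂ)
    (Al : Fin D → Matrix (Fin dl) (Fin dl) ℂ) :
    Matrix (Fin d0 × ((i : Fin n) → Fin (d i)) × Fin dl)
      (Fin d0 × ((i : Fin n) → Fin (d i)) × Fin dl) ℂ :=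
  ∑ α : Fin (n + 1) → Fin D,
    Matrix.of fun x y =>
      A0 (α 0) x.1 y.1
        * (∏ i, Am i (α i.castSucc) (α i.succ) (x.2.1 i) (y.2.1 i))
        * Al (α (Fin.last n)) x.2.2 y.2.2

/-- `ρ` admits an MPO decomposition of bond dimension `D` with arbitrary
complex local matrices. -/
def HasMPO (n d0 dl : ℕ) (d : Fin n → ℕ)
    (ρ : Matrix (Fin d0 × ((i : Fin n) → Fin (d i)) × Fin dl)
      (Fin d0 × ((i : Fin n) → Fin (d i)) × Fin dl) ℂ) (D : ℕ) : Prop :=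
  ∃ (A0 : Fin D → Matrix (Fin d0) (Fin d0) ℂ)
    (Am : (i : Fin n) → Fin D → Fin D → Matrix (Fin (d i)) (Fin (d i)) ℂ)
    (Al : Fin D → Matrix (Fin dl) (Fin dl) ℂ),
    ρ = mpoSum n d0 dl D d A0 Am Al

/-- `ρ` admits an MPO decomposition of bond dimension `D` with Hermitian
local matrices. -/
def HasHermMPO (n d0 dl : ℕ) (d : Fin n → ℕ)
    (ρ : Matrix (Fin d0 × ((i : Fin n) → Fin (d i)) × Fin dl)
      (Fin d0 × ((i : Fin n) → Fin (d i)) × Fin dl) ℂ) (D : ℕ) : Prop :=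
  ∃ (A0 : Fin D → Matrix (Fin d0) (Fin d0) ℂ)
    (Am : (i : Fin n) → Fin D → Fin D → Matrix (Fin (d i)) (Fin (d i)) ℂ)
    (Al : Fin D → Matrix (Fin dl) (Fin dl) ℂ),
    (∀ a, (A0 a).IsHermitian) ∧ (∀ i a b, (Am i a b).IsHermitian) ∧
    (∀ a, (Al a).IsHermitian) ∧ ρ = mpoSum n d0 dl D d A0 Am Al

/-- Operator Schmidt rank: minimal bond dimension of an MPO decomposition. -/
noncomputable def osr (n d0 dl : ℕ) (d : Fin n → ℕ)
    (ρ : Matrix (Fin d0 × ((i : Fin n) → Fin (d i)) × Fin dl)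
      (Fin d0 × ((i : Fin n) → Fin (d i)) × Fin dl) ℂ) : ℕ :=
  sInf {D | HasMPO n d0 dl d ρ D}

/-- Hermitian operator Schmidt rank: minimal bond dimension of an MPO
decomposition with Hermitian local matrices. -/
noncomputable def hosr (n d0 dl : ℕ) (d : Fin n → ℕ)
    (ρ : Matrix (Fin d0 × ((i : Fin n) → Fin (d i)) × Fin dl)
      (Fin d0 × ((i : Fin n) → Fin (d i)) × Fin dl) ℂ) : ℕ :=
  sInf {D | HasHermMPO n d0 dl d ρ D}

section Aux

variable (n d0 dl : ℕ) (d : Fin n → ℕ)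

/-- MPO expression with an arbitrary (finite) bond type `ι`. -/
noncomputable def gmpo (ι : Type) [Fintype ι]
    (A0 : ι → Matrix (Fin d0) (Fin d0) ℂ)
    (Am : (i : Fin n) → ι → ι → Matrix (Fin (d i)) (Fin (d i)) ℂ)
    (Al : ι → Matrix (Fin dl) (Fin dl) ℂ) :
    Matrix (Fin d0 × ((i : Fin n) → Fin (d i)) × Fin dl)
      (Fin d0 × ((i : Fin n) → Fin (d i)) × Fin dl) ℂ :=
  ∑ α : Fin (n + 1) → ι,
    Matrix.of fun x y =>
      A0 (α 0) x.1 y.1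
        * (∏ i, Am i (α i.castSucc) (α i.succ) (x.2.1 i) (y.2.1 i))
        * Al (α (Fin.last n)) x.2.2 y.2.2

theorem mpoSum_eq_gmpo (D : ℕ)
    (A0 : Fin D → Matrix (Fin d0) (Fin d0) ℂ)
    (Am : (i : Fin n) → Fin D → Fin D → Matrix (Fin (d i)) (Fin (d i)) ℂ)
    (Al : Fin D → Matrix (Fin dl) (Fin dl) ℂ) :
    mpoSum n d0 dl D d A0 Am Al = gmpo n d0 dl d (Fin D) A0 Am Al := rfl

theorem gmpo_apply (ι : Type) [Fintype ι] (A0) (Am) (Al) (x y) :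
    gmpo n d0 dl d ι A0 Am Al x y =
      ∑ α : Fin (n + 1) → ι,
        A0 (α 0) x.1 y.1
          * (∏ i, Am i (α i.castSucc) (α i.succ) (x.2.1 i) (y.2.1 i))
          * Al (α (Fin.last n)) x.2.2 y.2.2 := by
  simp [gmpo, Matrix.sum_apply]

theorem gmpo_reindex (ι κ : Type) [Fintype ι] [Fintype κ] (e : κ ≃ ι)
    (A0) (Am) (Al) :
    gmpo n d0 dl d ι A0 Am Al =
      gmpo n d0 dl d κ (fun a => A0 (e a)) (fun i a b => Am i (e a) (e b))
        (fun a => Al (e a)) := by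
  unfold gmpo
  exact (Fintype.sum_equiv (Equiv.arrowCongr (Equiv.refl (Fin (n+1))) e)
    _ _ (fun α => rfl)).symm

end Aux
section Aux2

variable {n d0 dl : ℕ} {d : Fin n → ℕ}

theorem gmpo_conjTranspose (ι : Type) [Fintype ι] (A0) (Am) (Al) :
    (gmpo n d0 dl d ι A0 Am Al)ᴴ =
      gmpo n d0 dl d ι (fun a => (A0 a)ᴴ) (fun i a b => (Am i a b)ᴴ)
        (fun a => (Al a)ᴴ) := by
  ext x y
  simp only [conjTranspose_apply, gmpo_apply, star_sum, star_mul', star_prod]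

theorem gmpo_add_last (ι : Type) [Fintype ι] (A0) (Am) (X Y) :
    gmpo n d0 dl d ι A0 Am (fun a => X a + Y a) =
      gmpo n d0 dl d ι A0 Am X + gmpo n d0 dl d ι A0 Am Y := by
  ext x y
  simp only [Matrix.add_apply, gmpo_apply, ← Finset.sum_add_distrib]
  refine Finset.sum_congr rfl fun α _ => ?_
  simp [Matrix.add_apply, mul_add]

theorem gmpo_smul (ι : Type) [Fintype ι] (c0 : ℂ) (cm : Fin n → ℂ) (cl : ℂ)
    (A0) (Am) (Al) :
    gmpo n d0 dl d ι (fun a => c0 • A0 a)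
      (fun i a b => cm i • Am i a b) (fun a => cl • Al a) =
      (c0 * (∏ i, cm i) * cl) • gmpo n d0 dl d ι A0 Am Al := by
  ext x y
  simp only [Matrix.smul_apply, gmpo_apply, smul_eq_mul, Finset.mul_sum,
    Finset.prod_mul_distrib]
  refine Finset.sum_congr rfl fun α _ => ?_
  ring

theorem gmpo_smul_last (ι : Type) [Fintype ι] (c : ℂ) (A0) (Am) (Al) :
    gmpo n d0 dl d ι A0 Am (fun a => c • Al a) =
      c • gmpo n d0 dl d ι A0 Am Al := by
  ext x y
  simp only [Matrix.smul_apply, gmpo_apply, smul_eq_mul, Finset.mul_sum]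
  refine Finset.sum_congr rfl fun α _ => ?_
  ring

theorem gmpo_smul_first (ι : Type) [Fintype ι] (c : ℂ) (A0) (Am) (Al) :
    gmpo n d0 dl d ι (fun a => c • A0 a) Am Al =
      c • gmpo n d0 dl d ι A0 Am Al := by
  ext x y
  simp only [Matrix.smul_apply, gmpo_apply, smul_eq_mul, Finset.mul_sum]
  refine Finset.sum_congr rfl fun α _ => ?_
  ring

end Aux2
section Aux3

variable {n d0 dl : ℕ} {d : Fin n → ℕ}

theorem eq_const_of_chain {ι : Type} {m : ℕ} (α : Fin (m + 1) → ι)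
    (h : ∀ i : Fin m, α i.castSucc = α i.succ) : α = fun _ => α 0 := by
  funext j
  induction j using Fin.induction with
  | zero => rfl
  | succ i ih => rw [← h i]; exact ih

theorem gmpo_block (κ β : Type) [Fintype κ] [DecidableEq κ] [Fintype β]
    (A0 : κ × β → Matrix (Fin d0) (Fin d0) ℂ)
    (Am : (i : Fin n) → κ × β → κ × β → Matrix (Fin (d i)) (Fin (d i)) ℂ)
    (Al : κ × β → Matrix (Fin dl) (Fin dl) ℂ)
    (h : ∀ (i : Fin n) k a k' b, k ≠ k' → Am i (k, a) (k', b) = 0) :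
    gmpo n d0 dl d (κ × β) A0 Am Al =
      ∑ k : κ, gmpo n d0 dl d β (fun a => A0 (k, a))
        (fun i a b => Am i (k, a) (k, b)) (fun a => Al (k, a)) := by
  classical
  ext x y
  rw [Matrix.sum_apply]
  simp only [gmpo_apply]
  set F : (Fin (n + 1) → κ) → (Fin (n + 1) → β) → ℂ := fun p q =>
    A0 (p 0, q 0) x.1 y.1
      * (∏ i, Am i (p i.castSucc, q i.castSucc)
          (p i.succ, q i.succ) (x.2.1 i) (y.2.1 i))
      * Al (p (Fin.last n), q (Fin.last n)) x.2.2 y.2.2 with hF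
  set cf : κ → (Fin (n + 1) → κ) := fun k _ => k with hcf
  have hinj : Function.Injective cf := fun k k' hkk => congrFun hkk 0
  have hvan : ∀ p ∉ Finset.image cf Finset.univ, ∑ q : Fin (n + 1) → β, F p q = 0 := by
    intro p hp
    have hnc : ∃ i : Fin n, p i.castSucc ≠ p i.succ := by
      by_contra hc
      push_neg at hc
      exact hp (Finset.mem_image.2 ⟨p 0, Finset.mem_univ _,
        (eq_const_of_chain p hc).symm⟩)
    obtain ⟨i, hi⟩ := hnc
    refine Finset.sum_eq_zero fun q _ => ?_
    show (A0 (p 0, q 0) x.1 y.1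
      * ∏ i : Fin n, Am i (p i.castSucc, q i.castSucc) (p i.succ, q i.succ)
          (x.2.1 i) (y.2.1 i))
      * Al (p (Fin.last n), q (Fin.last n)) x.2.2 y.2.2 = 0
    rw [Finset.prod_eq_zero (Finset.mem_univ i)
      (by rw [h i _ _ _ _ hi]; rfl)]
    ring
  calc
    ∑ α : Fin (n + 1) → κ × β,
        A0 (α 0) x.1 y.1
          * (∏ i, Am i (α i.castSucc) (α i.succ) (x.2.1 i) (y.2.1 i))
          * Al (α (Fin.last n)) x.2.2 y.2.2
      = ∑ pq : (Fin (n + 1) → κ) × (Fin (n + 1) → β), F pq.1 pq.2 :=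
        Fintype.sum_equiv (Equiv.arrowProdEquivProdArrow _ (fun _ => κ) (fun _ => β)) _ _
          (fun α => rfl)
    _ = ∑ p : Fin (n + 1) → κ, ∑ q : Fin (n + 1) → β, F p q :=
        Fintype.sum_prod_type (f := fun pq => F pq.1 pq.2)
    _ = ∑ p ∈ Finset.image cf Finset.univ, ∑ q : Fin (n + 1) → β, F p q :=
        (Finset.sum_subset (Finset.subset_univ _) (fun p _ hp => hvan p hp)).symm
    _ = ∑ k : κ, ∑ q : Fin (n + 1) → β, F (cf k) q :=
        Finset.sum_image (fun k _ k' _ hkk => hinj hkk)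
    _ = _ := rfl

theorem gmpo_unit (A0) (Am) (Al) :
    gmpo n d0 dl d Unit A0 Am Al =
      Matrix.of fun x y =>
        A0 () x.1 y.1 * (∏ i, Am i () () (x.2.1 i) (y.2.1 i))
          * Al () x.2.2 y.2.2 := by
  unfold gmpo
  rw [Fintype.sum_unique]

end Aux3
section Aux4

variable {n d0 dl : ℕ} {d : Fin n → ℕ}

theorem gmpo_add_first (ι : Type) [Fintype ι] (X Y) (Am) (Al) :
    gmpo n d0 dl d ι (fun a => X a + Y a) Am Al =
      gmpo n d0 dl d ι X Am Al + gmpo n d0 dl d ι Y Am Al := by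
  ext x y
  simp only [Matrix.add_apply, gmpo_apply, ← Finset.sum_add_distrib]
  refine Finset.sum_congr rfl fun α _ => ?_
  ring

theorem gmpo_expand_mid (ι : Type) [Fintype ι] (A0)
    (P Q : (i : Fin n) → ι → ι → Matrix (Fin (d i)) (Fin (d i)) ℂ) (Al) :
    gmpo n d0 dl d ι A0 (fun i a b => P i a b + Q i a b) Al =
      ∑ em : Fin n → Bool,
        gmpo n d0 dl d ι A0 (fun i a b => cond (em i) (P i a b) (Q i a b)) Al := by
  classical
  ext x y
  simp only [gmpo_apply, Matrix.sum_apply, Matrix.add_apply]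
  conv_rhs => rw [Finset.sum_comm]
  refine Finset.sum_congr rfl fun α _ => ?_
  have hprod : (∏ i, (P i (α i.castSucc) (α i.succ) (x.2.1 i) (y.2.1 i)
        + Q i (α i.castSucc) (α i.succ) (x.2.1 i) (y.2.1 i)))
      = ∑ em : Fin n → Bool, ∏ i,
          (cond (em i) (P i (α i.castSucc) (α i.succ)) (Q i (α i.castSucc) (α i.succ)))
            (x.2.1 i) (y.2.1 i) := by
    have h := Finset.prod_univ_sum (fun _ : Fin n => (Finset.univ : Finset Bool))
      (fun i b => (cond b (P i (α i.castSucc) (α i.succ)) (Q i (α i.castSucc) (α i.succ)))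
        (x.2.1 i) (y.2.1 i))
    rw [Fintype.piFinset_univ] at h
    simpa [Fintype.sum_bool, Fintype.piFinset_univ, Matrix.add_apply] using h
  rw [hprod, Finset.mul_sum, Finset.sum_mul]

end Aux4
section Aux5

variable {n d0 dl : ℕ} {d : Fin n → ℕ}

theorem gmpo_one (A0) (Am) (Al) :
    gmpo n d0 dl d (Fin 1) A0 Am Al =
      Matrix.of fun x y =>
        A0 0 x.1 y.1 * (∏ i, Am i 0 0 (x.2.1 i) (y.2.1 i))
          * Al 0 x.2.2 y.2.2 := by
  unfold gmpo
  rw [Fintype.sum_unique,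
    show (default : Fin (n + 1) → Fin 1) = fun _ => (0 : Fin 1) from
      Subsingleton.elim _ _]

theorem hasMPO_card_of_gmpo (ι : Type) [Fintype ι] (A0) (Am) (Al)
    (ρ : Matrix (Fin d0 × ((i : Fin n) → Fin (d i)) × Fin dl)
      (Fin d0 × ((i : Fin n) → Fin (d i)) × Fin dl) ℂ)
    (hρ : ρ = gmpo n d0 dl d ι A0 Am Al) :
    HasMPO n d0 dl d ρ (Fintype.card ι) := by
  let e : Fin (Fintype.card ι) ≃ ι := (Fintype.equivFin ι).symm
  exact ⟨fun a => A0 (e a), fun i a b => Am i (e a) (e b), fun a => Al (e a),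
    by rw [hρ, mpoSum_eq_gmpo]; exact gmpo_reindex n d0 dl d ι (Fin _) e A0 Am Al⟩

theorem hasHermMPO_card_of_gmpo (ι : Type) [Fintype ι] (A0) (Am) (Al)
    (h0 : ∀ a, (A0 a).IsHermitian) (hm : ∀ i a b, (Am i a b).IsHermitian)
    (hl : ∀ a, (Al a).IsHermitian)
    (ρ : Matrix (Fin d0 × ((i : Fin n) → Fin (d i)) × Fin dl)
      (Fin d0 × ((i : Fin n) → Fin (d i)) × Fin dl) ℂ)
    (hρ : ρ = gmpo n d0 dl d ι A0 Am Al) :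
    HasHermMPO n d0 dl d ρ (Fintype.card ι) := by
  let e : Fin (Fintype.card ι) ≃ ι := (Fintype.equivFin ι).symm
  exact ⟨fun a => A0 (e a), fun i a b => Am i (e a) (e b), fun a => Al (e a),
    fun a => h0 _, fun i a b => hm _ _ _, fun a => hl _,
    by rw [hρ, mpoSum_eq_gmpo]; exact gmpo_reindex n d0 dl d ι (Fin _) e A0 Am Al⟩

theorem exists_hasMPO
    (ρ : Matrix (Fin d0 × ((i : Fin n) → Fin (d i)) × Fin dl)
      (Fin d0 × ((i : Fin n) → Fin (d i)) × Fin dl) ℂ) :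
    ∃ D, HasMPO n d0 dl d ρ D := by
  classical
  set κ := (Fin d0 × ((i : Fin n) → Fin (d i)) × Fin dl)
    × (Fin d0 × ((i : Fin n) → Fin (d i)) × Fin dl) with hκ
  set A0 : κ × Fin 1 → Matrix (Fin d0) (Fin d0) ℂ := fun k =>
    Matrix.of fun u v => if u = k.1.1.1 ∧ v = k.1.2.1 then ρ k.1.1 k.1.2 else 0
    with hA0
  set Am : (i : Fin n) → κ × Fin 1 → κ × Fin 1 → Matrix (Fin (d i)) (Fin (d i)) ℂ :=
    fun i k k' => if k.1 = k'.1 then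
      (Matrix.of fun u v =>
        if u = k.1.1.2.1 i ∧ v = k.1.2.2.1 i then (1 : ℂ) else 0) else 0
    with hAm
  set Al : κ × Fin 1 → Matrix (Fin dl) (Fin dl) ℂ := fun k =>
    Matrix.of fun u v => if u = k.1.1.2.2 ∧ v = k.1.2.2.2 then (1 : ℂ) else 0
    with hAl
  refine ⟨_, hasMPO_card_of_gmpo (κ × Fin 1) A0 Am Al ρ ?_⟩
  rw [gmpo_block (n := n) κ (Fin 1) A0 Am Al
    (by intro i k a k' b hkk; simp only [hAm]; rw [if_neg]; exact hkk)]
  ext x y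
  rw [Matrix.sum_apply]
  have hmain : ∀ k : κ,
      gmpo n d0 dl d (Fin 1) (fun a => A0 (k, a))
        (fun i a b => Am i (k, a) (k, b)) (fun a => Al (k, a)) x y
      = (if x.1 = k.1.1 ∧ y.1 = k.2.1 then ρ k.1 k.2 else 0)
        * (∏ i, if x.2.1 i = k.1.2.1 i ∧ y.2.1 i = k.2.2.1 i then (1:ℂ) else 0)
        * (if x.2.2 = k.1.2.2 ∧ y.2.2 = k.2.2.2 then (1:ℂ) else 0) := by
    intro k
    rw [gmpo_one]
    simp only [Matrix.of_apply, hA0, hAm, hAl, if_pos rfl]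
  rw [Finset.sum_congr rfl (fun k _ => hmain k)]
  rw [Finset.sum_eq_single ((x, y) : κ)]
  · simp
  · intro k _ hk
    by_contra hne
    simp only [mul_ne_zero_iff, Finset.prod_ne_zero_iff, ite_ne_right_iff,
      Finset.mem_univ, forall_true_left, ne_eq, one_ne_zero, not_false_iff,
      and_true] at hne
    obtain ⟨⟨⟨⟨hx1, hy1⟩, -⟩, hm2⟩, hx3, hy3⟩ := hne
    refine hk ?_
    have e1 : k.1 = x := by
      obtain ⟨k1, k2⟩ := k
      obtain ⟨a, b, c⟩ := k1
      obtain ⟨xa, xb, xc⟩ := x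
      simp only [Prod.mk.injEq] at hx1 hx3 hm2 ⊢
      exact ⟨hx1.symm, funext fun i => ((hm2 i).1).symm, hx3.symm⟩
    have e2 : k.2 = y := by
      obtain ⟨k1, k2⟩ := k
      obtain ⟨a, b, c⟩ := k2
      obtain ⟨ya, yb, yc⟩ := y
      simp only [Prod.mk.injEq] at hy1 hy3 hm2 ⊢
      exact ⟨hy1.symm, funext fun i => ((hm2 i).2).symm, hy3.symm⟩
    rw [← e1, ← e2]
  · intro h
    exact absurd (Finset.mem_univ _) h

end Aux5
section Aux6

variable {n d0 dl : ℕ} {d : Fin n → ℕ}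

theorem hasHermMPO_sum_blocks {κ : Type} [Fintype κ] [DecidableEq κ] {Dk : ℕ}
    (ρf : κ → Matrix (Fin d0 × ((i : Fin n) → Fin (d i)) × Fin dl)
      (Fin d0 × ((i : Fin n) → Fin (d i)) × Fin dl) ℂ)
    (B0 : κ → Fin Dk → Matrix (Fin d0) (Fin d0) ℂ)
    (Bm : κ → (i : Fin n) → Fin Dk → Fin Dk → Matrix (Fin (d i)) (Fin (d i)) ℂ)
    (Bl : κ → Fin Dk → Matrix (Fin dl) (Fin dl) ℂ)
    (h0 : ∀ k a, (B0 k a).IsHermitian) (hm : ∀ k i a b, (Bm k i a b).IsHermitian)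
    (hl : ∀ k a, (Bl k a).IsHermitian)
    (hk : ∀ k, ρf k = gmpo n d0 dl d (Fin Dk) (B0 k) (Bm k) (Bl k)) :
    HasHermMPO n d0 dl d (∑ k, ρf k) (Fintype.card κ * Dk) := by
  classical
  set A0 : κ × Fin Dk → Matrix (Fin d0) (Fin d0) ℂ := fun p => B0 p.1 p.2 with hA0
  set Am : (i : Fin n) → κ × Fin Dk → κ × Fin Dk → Matrix (Fin (d i)) (Fin (d i)) ℂ :=
    fun i p q => if p.1 = q.1 then Bm p.1 i p.2 q.2 else 0 with hAmd
  set Al : κ × Fin Dk → Matrix (Fin dl) (Fin dl) ℂ := fun p => Bl p.1 p.2 with hAl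
  have hgm : (∑ k, ρf k) = gmpo n d0 dl d (κ × Fin Dk) A0 Am Al := by
    rw [gmpo_block κ (Fin Dk) A0 Am Al (fun i k a k' b hne => if_neg hne)]
    refine Finset.sum_congr rfl fun k _ => ?_
    rw [hk k]
    have hdiag : (fun (i : Fin n) (a b : Fin Dk) => Am i (k, a) (k, b)) = Bm k := by
      funext i a b
      simp [hAmd]
    rw [← hdiag]
  have := hasHermMPO_card_of_gmpo (κ × Fin Dk) A0 Am Al
    (fun p => h0 _ _)
    (fun i p q => by
      simp only [hAmd]
      split_ifs
      · exact hm _ _ _ _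
      · exact Matrix.isHermitian_zero)
    (fun p => hl _ _) _ hgm
  simpa [Fintype.card_prod] using this

theorem gmpo_expand_parts (D : ℕ) (u : ℂ)
    (P0 : Bool → Fin D → Matrix (Fin d0) (Fin d0) ℂ)
    (Pm : (i : Fin n) → Bool → Fin D → Fin D → Matrix (Fin (d i)) (Fin (d i)) ℂ)
    (Pl : Bool → Fin D → Matrix (Fin dl) (Fin dl) ℂ) :
    gmpo n d0 dl d (Fin D) (fun a => P0 false a + u • P0 true a)
      (fun i a b => Pm i false a b + u • Pm i true a b)
      (fun a => Pl false a + u • Pl true a)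
    = ∑ em : Fin n → Bool, ∑ p : Bool × Bool,
        ((cond p.1 u 1) * (∏ i, cond (em i) u 1) * (cond p.2 u 1)) •
          gmpo n d0 dl d (Fin D) (P0 p.1) (fun i => Pm i (em i)) (Pl p.2) := by
  have h0 : (fun a => P0 false a + u • P0 true a)
      = fun a => (cond false u 1) • P0 false a + (cond true u 1) • P0 true a := by
    funext a; rw [cond_false, cond_true, one_smul]
  have hmid : (fun (i : Fin n) a b => Pm i false a b + u • Pm i true a b)
      = fun (i : Fin n) a b => ((cond true u 1) • Pm i true a b)
          + ((cond false u 1) • Pm i false a b) := by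
    funext i a b; rw [cond_false, cond_true, one_smul, add_comm]
  have hlst : (fun a => Pl false a + u • Pl true a)
      = fun a => (cond false u 1) • Pl false a + (cond true u 1) • Pl true a := by
    funext a; rw [cond_false, cond_true, one_smul]
  rw [h0, hmid, hlst, gmpo_expand_mid]
  refine Finset.sum_congr rfl fun em _ => ?_
  have hcondm : (fun (i : Fin n) (a b : Fin D) =>
        cond (em i) ((cond true u 1) • Pm i true a b) ((cond false u 1) • Pm i false a b))
      = fun (i : Fin n) (a b : Fin D) => (cond (em i) u 1) • Pm i (em i) a b := by
    funext i a b
    cases em i <;> rfl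
  rw [hcondm, gmpo_add_first, gmpo_add_last, gmpo_add_last]
  rw [gmpo_smul (Fin D) (cond false u 1) (fun i => cond (em i) u 1) (cond false u 1)
      (P0 false) (fun i => Pm i (em i)) (Pl false),
    gmpo_smul (Fin D) (cond false u 1) (fun i => cond (em i) u 1) (cond true u 1)
      (P0 false) (fun i => Pm i (em i)) (Pl true),
    gmpo_smul (Fin D) (cond true u 1) (fun i => cond (em i) u 1) (cond false u 1)
      (P0 true) (fun i => Pm i (em i)) (Pl false),
    gmpo_smul (Fin D) (cond true u 1) (fun i => cond (em i) u 1) (cond true u 1)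
      (P0 true) (fun i => Pm i (em i)) (Pl true)]
  rw [Fintype.sum_prod_type, Fintype.sum_bool, Fintype.sum_bool, Fintype.sum_bool]
  abel

end Aux6
section Aux7

variable {n d0 dl : ℕ} {d : Fin n → ℕ}

theorem herm_Hpart {m : ℕ} (X : Matrix (Fin m) (Fin m) ℂ) :
    ((1/2 : ℂ) • (X + Xᴴ)).IsHermitian := by
  have h : (X + Xᴴ)ᴴ = X + Xᴴ := by
    rw [Matrix.conjTranspose_add, Matrix.conjTranspose_conjTranspose, add_comm]
  show _ = _
  rw [Matrix.conjTranspose_smul, h]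
  norm_num

theorem herm_Kpart {m : ℕ} (X : Matrix (Fin m) (Fin m) ℂ) :
    ((-(Complex.I)/2 : ℂ) • (X - Xᴴ)).IsHermitian := by
  have h : (X - Xᴴ)ᴴ = -(X - Xᴴ) := by
    rw [Matrix.conjTranspose_sub, Matrix.conjTranspose_conjTranspose, neg_sub]
  show _ = _
  rw [Matrix.conjTranspose_smul, h, smul_neg, ← neg_smul]
  congr 1
  simp [Complex.ext_iff]
  norm_num

theorem split_parts {m : ℕ} (X : Matrix (Fin m) (Fin m) ℂ) :
    X = (1/2 : ℂ) • (X + Xᴴ) + Complex.I • ((-(Complex.I)/2 : ℂ) • (X - Xᴴ)) := by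
  have hI : Complex.I * (-Complex.I / 2) = 1 / 2 := by
    have h2 := Complex.I_mul_I
    linear_combination -1/2 * h2
  rw [smul_smul, hI]
  ext i j
  simp only [Matrix.add_apply, Matrix.sub_apply, Matrix.smul_apply,
    Matrix.conjTranspose_apply, smul_eq_mul]
  ring

theorem split_partsH {m : ℕ} (X : Matrix (Fin m) (Fin m) ℂ) :
    Xᴴ = (1/2 : ℂ) • (X + Xᴴ) + (-Complex.I) • ((-(Complex.I)/2 : ℂ) • (X - Xᴴ)) := by
  have hI : -Complex.I * (-Complex.I / 2) = -(1 / 2) := by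
    have h2 := Complex.I_mul_I
    linear_combination 1/2 * h2
  rw [smul_smul, hI]
  ext i j
  simp only [Matrix.add_apply, Matrix.sub_apply, Matrix.smul_apply,
    Matrix.conjTranspose_apply, smul_eq_mul]
  ring

theorem hasHermMPO_of_hasMPO {D : ℕ}
    (ρ : Matrix (Fin d0 × ((i : Fin n) → Fin (d i)) × Fin dl)
      (Fin d0 × ((i : Fin n) → Fin (d i)) × Fin dl) ℂ)
    (hρ : ρ.IsHermitian) (h : HasMPO n d0 dl d ρ D) :
    HasHermMPO n d0 dl d ρ (2 ^ (n + 1) * D) := by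
  classical
  obtain ⟨A0, Am, Al, hdec⟩ := h
  set P0 : Bool → Fin D → Matrix (Fin d0) (Fin d0) ℂ := fun e a =>
    cond e ((-(Complex.I)/2 : ℂ) • (A0 a - (A0 a)ᴴ))
      ((1/2 : ℂ) • (A0 a + (A0 a)ᴴ)) with hP0
  set Pm : (i : Fin n) → Bool → Fin D → Fin D → Matrix (Fin (d i)) (Fin (d i)) ℂ :=
    fun i e a b =>
      cond e ((-(Complex.I)/2 : ℂ) • (Am i a b - (Am i a b)ᴴ))
        ((1/2 : ℂ) • (Am i a b + (Am i a b)ᴴ)) with hPm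
  set Pl : Bool → Fin D → Matrix (Fin dl) (Fin dl) ℂ := fun e a =>
    cond e ((-(Complex.I)/2 : ℂ) • (Al a - (Al a)ᴴ))
      ((1/2 : ℂ) • (Al a + (Al a)ᴴ)) with hPl
  have hP0herm : ∀ e a, (P0 e a).IsHermitian := by
    intro e a; cases e
    · exact herm_Hpart _
    · exact herm_Kpart _
  have hPmherm : ∀ i e a b, (Pm i e a b).IsHermitian := by
    intro i e a b; cases e
    · exact herm_Hpart _
    · exact herm_Kpart _
  have hPlherm : ∀ e a, (Pl e a).IsHermitian := by
    intro e a; cases e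
    · exact herm_Hpart _
    · exact herm_Kpart _
  -- the two expansions
  have e0I : A0 = fun a => P0 false a + Complex.I • P0 true a :=
    funext fun a => split_parts (A0 a)
  have emI : Am = fun i a b => Pm i false a b + Complex.I • Pm i true a b :=
    funext fun i => funext fun a => funext fun b => split_parts (Am i a b)
  have elI : Al = fun a => Pl false a + Complex.I • Pl true a :=
    funext fun a => split_parts (Al a)
  have hEI : ρ = ∑ em : Fin n → Bool, ∑ p : Bool × Bool,
      ((cond p.1 Complex.I 1) * (∏ i, cond (em i) Complex.I 1)
          * (cond p.2 Complex.I 1)) •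
        gmpo n d0 dl d (Fin D) (P0 p.1) (fun i => Pm i (em i)) (Pl p.2) := by
    conv_lhs => rw [hdec, mpoSum_eq_gmpo, e0I, emI, elI]
    rw [gmpo_expand_parts]
  have e0J : (fun a => (A0 a)ᴴ) = fun a => P0 false a + (-Complex.I) • P0 true a :=
    funext fun a => split_partsH (A0 a)
  have emJ : (fun i a b => (Am i a b)ᴴ)
      = fun i a b => Pm i false a b + (-Complex.I) • Pm i true a b :=
    funext fun i => funext fun a => funext fun b => split_partsH (Am i a b)
  have elJ : (fun a => (Al a)ᴴ) = fun a => Pl false a + (-Complex.I) • Pl true a :=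
    funext fun a => split_partsH (Al a)
  have hEJ : ρ = ∑ em : Fin n → Bool, ∑ p : Bool × Bool,
      ((cond p.1 (-Complex.I) 1) * (∏ i, cond (em i) (-Complex.I) 1)
          * (cond p.2 (-Complex.I) 1)) •
        gmpo n d0 dl d (Fin D) (P0 p.1) (fun i => Pm i (em i)) (Pl p.2) := by
    conv_lhs => rw [← hρ, hdec, mpoSum_eq_gmpo, gmpo_conjTranspose, e0J, emJ, elJ]
    rw [gmpo_expand_parts]
  -- conjugate relation for coefficients
  have hcnd : ∀ e : Bool, cond e (-Complex.I) 1 = star (cond e Complex.I 1) := by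
    intro e; cases e <;> simp
  -- the real coefficients
  set r : (Bool × (Fin n → Bool)) → Bool → ℂ := fun q el =>
    ((cond q.1 Complex.I 1) * (∏ i, cond (q.2 i) Complex.I 1) * (cond el Complex.I 1)
      + star ((cond q.1 Complex.I 1) * (∏ i, cond (q.2 i) Complex.I 1)
          * (cond el Complex.I 1))) / 2 with hr
  have hrreal : ∀ q el, star (r q el) = r q el := by
    intro q el
    simp only [hr]
    rw [star_div₀, star_add, star_star]
    norm_num
    ring
  have key : ρ = ∑ em : Fin n → Bool, ∑ p : Bool × Bool,
      r (p.1, em) p.2 •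
        gmpo n d0 dl d (Fin D) (P0 p.1) (fun i => Pm i (em i)) (Pl p.2) := by
    have hhalf : ρ = (1/2 : ℂ) • ρ + (1/2 : ℂ) • ρ := by
      rw [← add_smul]; norm_num
    rw [hhalf]
    nth_rewrite 2 [hEJ]
    nth_rewrite 1 [hEI]
    rw [Finset.smul_sum, Finset.smul_sum, ← Finset.sum_add_distrib]
    refine Finset.sum_congr rfl fun em _ => ?_
    rw [Finset.smul_sum, Finset.smul_sum, ← Finset.sum_add_distrib]
    refine Finset.sum_congr rfl fun p _ => ?_
    rw [smul_smul, smul_smul, ← add_smul]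
    congr 1
    simp only [hr, hcnd]
    rw [← star_prod, ← star_mul', ← star_mul']
    ring
  -- regroup into `2^(n+1)` Hermitian blocks of bond dimension `D`
  have hblk : ∀ q : Bool × (Fin n → Bool),
      gmpo n d0 dl d (Fin D) (P0 q.1) (fun i => Pm i (q.2 i))
        (fun a => r q false • Pl false a + r q true • Pl true a)
      = r q false • gmpo n d0 dl d (Fin D) (P0 q.1) (fun i => Pm i (q.2 i)) (Pl false)
        + r q true • gmpo n d0 dl d (Fin D) (P0 q.1) (fun i => Pm i (q.2 i)) (Pl true) := by
    intro q
    rw [gmpo_add_last, gmpo_smul_last, gmpo_smul_last]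
  have hsum : ρ = ∑ q : Bool × (Fin n → Bool),
      gmpo n d0 dl d (Fin D) (P0 q.1) (fun i => Pm i (q.2 i))
        (fun a => r q false • Pl false a + r q true • Pl true a) := by
    rw [key, Finset.sum_congr rfl (fun q (_ : q ∈ Finset.univ) => hblk q)]
    simp only [Fintype.sum_prod_type]
    rw [Finset.sum_comm]
    refine Finset.sum_congr rfl fun e0 _ => Finset.sum_congr rfl fun em _ => ?_
    rw [Fintype.sum_bool]
    exact add_comm _ _
  have hherm := hasHermMPO_sum_blocks (n := n) (d := d)
    (κ := Bool × (Fin n → Bool)) (Dk := D)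
    (fun q => gmpo n d0 dl d (Fin D) (P0 q.1) (fun i => Pm i (q.2 i))
      (fun a => r q false • Pl false a + r q true • Pl true a))
    (fun q => P0 q.1) (fun q i => Pm i (q.2 i))
    (fun q a => r q false • Pl false a + r q true • Pl true a)
    (fun q a => hP0herm _ _) (fun q i a b => hPmherm _ _ _ _)
    (fun q a => by
      have h1 : (r q false • Pl false a).IsHermitian := by
        show _ = _
        rw [Matrix.conjTranspose_smul, hrreal, hPlherm]
      have h2 : (r q true • Pl true a).IsHermitian := by
        show _ = _
        rw [Matrix.conjTranspose_smul, hrreal, hPlherm]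
      exact h1.add h2)
    (fun q => rfl)
  have hcard : Fintype.card (Bool × (Fin n → Bool)) * D = 2 ^ (n + 1) * D := by
    simp only [Fintype.card_prod, Fintype.card_bool, Fintype.card_fun,
      Fintype.card_fin]
    rw [pow_succ, mul_comm (2 ^ n) 2]
  rw [hsum]
  exact hcard ▸ hherm

end Aux7
section Bipartite

variable {d0 dl : ℕ} {d : Fin 0 → ℕ}

/-- Two-site Kronecker-type product for the `n = 0` case. -/
noncomputable def kron2 (A : Matrix (Fin d0) (Fin d0) ℂ)
    (B : Matrix (Fin dl) (Fin dl) ℂ) :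
    Matrix (Fin d0 × ((i : Fin 0) → Fin (d i)) × Fin dl)
      (Fin d0 × ((i : Fin 0) → Fin (d i)) × Fin dl) ℂ :=
  Matrix.of fun x y => A x.1 y.1 * B x.2.2 y.2.2

theorem mpoSum_zero (D : ℕ) (A0 : Fin D → Matrix (Fin d0) (Fin d0) ℂ)
    (Am : (i : Fin 0) → Fin D → Fin D → Matrix (Fin (d i)) (Fin (d i)) ℂ)
    (Al : Fin D → Matrix (Fin dl) (Fin dl) ℂ) :
    mpoSum 0 d0 dl D d A0 Am Al = ∑ a : Fin D, kron2 (d := d) (A0 a) (Al a) := by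
  rw [mpoSum_eq_gmpo]
  unfold gmpo
  refine Fintype.sum_equiv (Equiv.funUnique (Fin 1) (Fin D)) _ _ fun α => ?_
  ext x y
  simp [kron2, Fin.prod_univ_zero, Equiv.funUnique,
    show (Fin.last 0) = 0 from rfl]

theorem hasMPO_zero_iff (D : ℕ)
    (ρ : Matrix (Fin d0 × ((i : Fin 0) → Fin (d i)) × Fin dl)
      (Fin d0 × ((i : Fin 0) → Fin (d i)) × Fin dl) ℂ) :
    HasMPO 0 d0 dl d ρ D ↔
      ∃ (A : Fin D → Matrix (Fin d0) (Fin d0) ℂ)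
        (B : Fin D → Matrix (Fin dl) (Fin dl) ℂ),
        ρ = ∑ a : Fin D, kron2 (d := d) (A a) (B a) := by
  constructor
  · rintro ⟨A0, Am, Al, hdec⟩
    exact ⟨A0, Al, by rw [hdec, mpoSum_zero]⟩
  · rintro ⟨A, B, hdec⟩
    exact ⟨A, fun i => i.elim0, B, by rw [hdec, mpoSum_zero]⟩

theorem hasHermMPO_zero_iff (D : ℕ)
    (ρ : Matrix (Fin d0 × ((i : Fin 0) → Fin (d i)) × Fin dl)
      (Fin d0 × ((i : Fin 0) → Fin (d i)) × Fin dl) ℂ) :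
    HasHermMPO 0 d0 dl d ρ D ↔
      ∃ (A : Fin D → Matrix (Fin d0) (Fin d0) ℂ)
        (B : Fin D → Matrix (Fin dl) (Fin dl) ℂ),
        (∀ a, (A a).IsHermitian) ∧ (∀ a, (B a).IsHermitian) ∧
        ρ = ∑ a : Fin D, kron2 (d := d) (A a) (B a) := by
  constructor
  · rintro ⟨A0, Am, Al, h0, _, hl, hdec⟩
    exact ⟨A0, Al, h0, hl, by rw [hdec, mpoSum_zero]⟩
  · rintro ⟨A, B, hA, hB, hdec⟩
    exact ⟨A, fun i => i.elim0, B, hA, fun i => i.elim0, hB,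
      by rw [hdec, mpoSum_zero]⟩

theorem kron2_add_left (A A' : Matrix (Fin d0) (Fin d0) ℂ) (B : Matrix (Fin dl) (Fin dl) ℂ) :
    kron2 (d := d) (A + A') B = kron2 (d := d) A B + kron2 (d := d) A' B := by
  ext x y; simp [kron2, Matrix.add_apply, add_mul]

theorem kron2_sub_left (A A' : Matrix (Fin d0) (Fin d0) ℂ) (B : Matrix (Fin dl) (Fin dl) ℂ) :
    kron2 (d := d) (A - A') B = kron2 (d := d) A B - kron2 (d := d) A' B := by
  ext x y; simp [kron2, Matrix.sub_apply, sub_mul]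

theorem kron2_smul_left (c : ℂ) (A : Matrix (Fin d0) (Fin d0) ℂ) (B : Matrix (Fin dl) (Fin dl) ℂ) :
    kron2 (d := d) (c • A) B = c • kron2 (d := d) A B := by
  ext x y; simp [kron2, Matrix.smul_apply, smul_eq_mul]; ring

theorem kron2_smul_right (c : ℂ) (A : Matrix (Fin d0) (Fin d0) ℂ) (B : Matrix (Fin dl) (Fin dl) ℂ) :
    kron2 (d := d) A (c • B) = c • kron2 (d := d) A B := by
  ext x y; simp [kron2, Matrix.smul_apply, smul_eq_mul]; ring

theorem kron2_sum_right {m : Type} [Fintype m] (A : Matrix (Fin d0) (Fin d0) ℂ)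
    (B : m → Matrix (Fin dl) (Fin dl) ℂ) :
    kron2 (d := d) A (∑ j, B j) = ∑ j, kron2 (d := d) A (B j) := by
  ext x y; simp [kron2, Matrix.sum_apply, Finset.mul_sum]

theorem kron2_conjTranspose (A : Matrix (Fin d0) (Fin d0) ℂ) (B : Matrix (Fin dl) (Fin dl) ℂ) :
    (kron2 (d := d) A B)ᴴ = kron2 (d := d) Aᴴ Bᴴ := by
  ext x y; simp [kron2, Matrix.conjTranspose_apply, star_mul']

/-- Cancellation against a linearly independent right family. -/
theorem kron2_cancel {D : ℕ} (X : Fin D → Matrix (Fin d0) (Fin d0) ℂ)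
    (C : Fin D → Matrix (Fin dl) (Fin dl) ℂ) (hC : LinearIndependent ℂ C)
    (h : ∑ a, kron2 (d := d) (X a) (C a) = 0) : ∀ a, X a = 0 := by
  have hco : ∀ u v b, X b u v = 0 := by
    intro u v
    have hsum : ∑ b, X b u v • C b = 0 := by
      ext s t
      have h1 : (∑ b, kron2 (d := d) (X b) (C b)) (u, default, s) (v, default, t)
          = 0 := by rw [h]; rfl
      rw [Matrix.sum_apply] at h1
      simpa [kron2, Matrix.sum_apply, Matrix.smul_apply, smul_eq_mul] using h1
    exact fun b => Fintype.linearIndependent_iff.1 hC _ hsum b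
  intro a; ext u v
  simpa using hco u v a

theorem kron2_cancel_eq {D : ℕ} (X X' : Fin D → Matrix (Fin d0) (Fin d0) ℂ)
    (C : Fin D → Matrix (Fin dl) (Fin dl) ℂ) (hC : LinearIndependent ℂ C)
    (h : ∑ a, kron2 (d := d) (X a) (C a) = ∑ a, kron2 (d := d) (X' a) (C a)) :
    ∀ a, X a = X' a := by
  intro a
  have h0 : ∑ a, kron2 (d := d) (X a - X' a) (C a) = 0 := by
    simp only [kron2_sub_left, Finset.sum_sub_distrib, h, sub_self]
  have := kron2_cancel _ C hC h0 a
  exact sub_eq_zero.1 this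

end Bipartite
section Dual

theorem exists_dual_family {V : Type} [AddCommGroup V] [Module ℂ V]
    {D : ℕ} {v : Fin D → V} (hv : LinearIndependent ℂ v) :
    ∃ φ : Fin D → (V →ₗ[ℂ] ℂ), ∀ c b, φ c (v b) = if b = c then 1 else 0 := by
  classical
  obtain ⟨W', hcompl⟩ := Submodule.exists_isCompl (Submodule.span ℂ (Set.range v))
  let π := Submodule.linearProjOfIsCompl _ W' hcompl
  refine ⟨fun c => Finsupp.lapply c ∘ₗ (hv.repr : _ →ₗ[ℂ] (Fin D →₀ ℂ)) ∘ₗ π,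
    fun c b => ?_⟩
  have hmem : v b ∈ Submodule.span ℂ (Set.range v) :=
    Submodule.subset_span (Set.mem_range_self b)
  have hπ : π (v b) = ⟨v b, hmem⟩ :=
    Submodule.linearProjOfIsCompl_apply_left hcompl ⟨v b, hmem⟩
  have hrepr : hv.repr ⟨v b, hmem⟩ = Finsupp.single b 1 :=
    hv.repr_eq_single b ⟨v b, hmem⟩ rfl
  simp [π, hπ, hrepr, Finsupp.single_apply]

end Dual
section Reduce

variable {d0 dl : ℕ} {d : Fin 0 → ℕ}

theorem kron2_sum_left {m : Type} [Fintype m] (A : m → Matrix (Fin d0) (Fin d0) ℂ)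
    (B : Matrix (Fin dl) (Fin dl) ℂ) :
    kron2 (d := d) (∑ j, A j) B = ∑ j, kron2 (d := d) (A j) B := by
  ext x y; simp [kron2, Matrix.sum_apply, Finset.sum_mul]

theorem kron2_add_right (A : Matrix (Fin d0) (Fin d0) ℂ)
    (B B' : Matrix (Fin dl) (Fin dl) ℂ) :
    kron2 (d := d) A (B + B') = kron2 (d := d) A B + kron2 (d := d) A B' := by
  ext x y; simp [kron2, Matrix.add_apply, mul_add]

theorem reduce_right {D : ℕ}
    (A : Fin (D + 1) → Matrix (Fin d0) (Fin d0) ℂ)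
    (B : Fin (D + 1) → Matrix (Fin dl) (Fin dl) ℂ)
    (hdep : ¬ LinearIndependent ℂ B) :
    ∃ (A' : Fin D → Matrix (Fin d0) (Fin d0) ℂ)
      (B' : Fin D → Matrix (Fin dl) (Fin dl) ℂ),
      ∑ a, kron2 (d := d) (A a) (B a) = ∑ j, kron2 (d := d) (A' j) (B' j) := by
  obtain ⟨g, hg, a, hga⟩ := Fintype.not_linearIndependent_iff.1 hdep
  have hsplit := Fin.sum_univ_succAbove (fun b => g b • B b) a
  rw [hg] at hsplit
  have h1 : g a • B a = -∑ j, g (a.succAbove j) • B (a.succAbove j) :=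
    eq_neg_of_add_eq_zero_left hsplit.symm
  have hBa : B a = ∑ j, (-(g a)⁻¹ * g (a.succAbove j)) • B (a.succAbove j) := by
    have h2 : B a = (g a)⁻¹ • (g a • B a) := by
      rw [smul_smul, inv_mul_cancel₀ hga, one_smul]
    rw [h2, h1, smul_neg, Finset.smul_sum]
    rw [← Finset.sum_neg_distrib]
    refine Finset.sum_congr rfl fun j _ => ?_
    rw [smul_smul, ← neg_smul]
    ring_nf
  refine ⟨fun j => A (a.succAbove j) + (-(g a)⁻¹ * g (a.succAbove j)) • A a,
    fun j => B (a.succAbove j), ?_⟩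
  calc
    ∑ b, kron2 (d := d) (A b) (B b)
      = kron2 (d := d) (A a) (B a)
          + ∑ j, kron2 (d := d) (A (a.succAbove j)) (B (a.succAbove j)) :=
        Fin.sum_univ_succAbove _ a
    _ = ∑ j, kron2 (d := d) ((-(g a)⁻¹ * g (a.succAbove j)) • A a)
            (B (a.succAbove j))
          + ∑ j, kron2 (d := d) (A (a.succAbove j)) (B (a.succAbove j)) := by
        rw [hBa, kron2_sum_right]
        congr 1
        refine Finset.sum_congr rfl fun j _ => ?_
        rw [kron2_smul_right, kron2_smul_left]
    _ = ∑ j, kron2 (d := d)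
          (A (a.succAbove j) + (-(g a)⁻¹ * g (a.succAbove j)) • A a)
          (B (a.succAbove j)) := by
        rw [← Finset.sum_add_distrib]
        refine Finset.sum_congr rfl fun j _ => ?_
        rw [kron2_add_left]
        exact add_comm _ _

theorem reduce_left {D : ℕ}
    (A : Fin (D + 1) → Matrix (Fin d0) (Fin d0) ℂ)
    (B : Fin (D + 1) → Matrix (Fin dl) (Fin dl) ℂ)
    (hdep : ¬ LinearIndependent ℂ A) :
    ∃ (A' : Fin D → Matrix (Fin d0) (Fin d0) ℂ)
      (B' : Fin D → Matrix (Fin dl) (Fin dl) ℂ),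
      ∑ a, kron2 (d := d) (A a) (B a) = ∑ j, kron2 (d := d) (A' j) (B' j) := by
  obtain ⟨g, hg, a, hga⟩ := Fintype.not_linearIndependent_iff.1 hdep
  have hsplit := Fin.sum_univ_succAbove (fun b => g b • A b) a
  rw [hg] at hsplit
  have h1 : g a • A a = -∑ j, g (a.succAbove j) • A (a.succAbove j) :=
    eq_neg_of_add_eq_zero_left hsplit.symm
  have hAa : A a = ∑ j, (-(g a)⁻¹ * g (a.succAbove j)) • A (a.succAbove j) := by
    have h2 : A a = (g a)⁻¹ • (g a • A a) := by
      rw [smul_smul, inv_mul_cancel₀ hga, one_smul]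
    rw [h2, h1, smul_neg, Finset.smul_sum]
    rw [← Finset.sum_neg_distrib]
    refine Finset.sum_congr rfl fun j _ => ?_
    rw [smul_smul, ← neg_smul]
    ring_nf
  refine ⟨fun j => A (a.succAbove j),
    fun j => B (a.succAbove j) + (-(g a)⁻¹ * g (a.succAbove j)) • B a, ?_⟩
  calc
    ∑ b, kron2 (d := d) (A b) (B b)
      = kron2 (d := d) (A a) (B a)
          + ∑ j, kron2 (d := d) (A (a.succAbove j)) (B (a.succAbove j)) :=
        Fin.sum_univ_succAbove _ a
    _ = ∑ j, kron2 (d := d) (A (a.succAbove j))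
            ((-(g a)⁻¹ * g (a.succAbove j)) • B a)
          + ∑ j, kron2 (d := d) (A (a.succAbove j)) (B (a.succAbove j)) := by
        rw [hAa, kron2_sum_left]
        congr 1
        refine Finset.sum_congr rfl fun j _ => ?_
        rw [kron2_smul_left, kron2_smul_right]
    _ = ∑ j, kron2 (d := d) (A (a.succAbove j))
          (B (a.succAbove j) + (-(g a)⁻¹ * g (a.succAbove j)) • B a) := by
        rw [← Finset.sum_add_distrib]
        refine Finset.sum_congr rfl fun j _ => ?_
        rw [kron2_add_right]
        exact add_comm _ _

end Reduce
section Core0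

variable {d0 dl : ℕ} {d : Fin 0 → ℕ}

theorem indep_conjTranspose {m D : ℕ} (v : Fin D → Matrix (Fin m) (Fin m) ℂ)
    (hv : LinearIndependent ℂ v) :
    LinearIndependent ℂ (fun a => (v a)ᴴ) := by
  rw [Fintype.linearIndependent_iff] at hv ⊢
  intro g hg a
  have h2 : ∑ b, star (g b) • v b = 0 := by
    have h3 := congrArg Matrix.conjTranspose hg
    simpa [Matrix.conjTranspose_sum, Matrix.conjTranspose_smul] using h3
  exact star_eq_zero.1 (hv _ h2 a)

theorem indepB_of_min {D : ℕ}
    (ρ : Matrix (Fin d0 × ((i : Fin 0) → Fin (d i)) × Fin dl)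
      (Fin d0 × ((i : Fin 0) → Fin (d i)) × Fin dl) ℂ)
    (A : Fin D → Matrix (Fin d0) (Fin d0) ℂ)
    (B : Fin D → Matrix (Fin dl) (Fin dl) ℂ)
    (hdec : ρ = ∑ a, kron2 (d := d) (A a) (B a))
    (hmin : ∀ D' < D, ¬ HasMPO 0 d0 dl d ρ D') :
    LinearIndependent ℂ B := by
  by_contra hdep
  cases D with
  | zero => exact hdep linearIndependent_empty_type
  | succ D =>
      obtain ⟨A', B', heq⟩ := reduce_right A B hdep
      exact hmin D (Nat.lt_succ_self D)
        ((hasMPO_zero_iff D ρ).2 ⟨A', B', hdec.trans heq⟩)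

theorem indepA_of_min {D : ℕ}
    (ρ : Matrix (Fin d0 × ((i : Fin 0) → Fin (d i)) × Fin dl)
      (Fin d0 × ((i : Fin 0) → Fin (d i)) × Fin dl) ℂ)
    (A : Fin D → Matrix (Fin d0) (Fin d0) ℂ)
    (B : Fin D → Matrix (Fin dl) (Fin dl) ℂ)
    (hdec : ρ = ∑ a, kron2 (d := d) (A a) (B a))
    (hmin : ∀ D' < D, ¬ HasMPO 0 d0 dl d ρ D') :
    LinearIndependent ℂ A := by
  by_contra hdep
  cases D with
  | zero => exact hdep linearIndependent_empty_type
  | succ D =>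
      obtain ⟨A', B', heq⟩ := reduce_left A B hdep
      exact hmin D (Nat.lt_succ_self D)
        ((hasMPO_zero_iff D ρ).2 ⟨A', B', hdec.trans heq⟩)

/-- Contraction of the first factor against a linear functional. -/
noncomputable def ctr2 (ψ : Matrix (Fin d0) (Fin d0) ℂ →ₗ[ℂ] ℂ)
    (M : Matrix (Fin d0 × ((i : Fin 0) → Fin (d i)) × Fin dl)
      (Fin d0 × ((i : Fin 0) → Fin (d i)) × Fin dl) ℂ) :
    Matrix (Fin dl) (Fin dl) ℂ :=
  Matrix.of fun s t =>
    ψ (Matrix.of fun u v => M (u, default, s) (v, default, t))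

theorem ctr2_sum {D : ℕ} (ψ : Matrix (Fin d0) (Fin d0) ℂ →ₗ[ℂ] ℂ)
    (X : Fin D → Matrix (Fin d0) (Fin d0) ℂ)
    (C : Fin D → Matrix (Fin dl) (Fin dl) ℂ) :
    ctr2 (d := d) ψ (∑ a, kron2 (d := d) (X a) (C a)) = ∑ a, ψ (X a) • C a := by
  ext s t
  have hof : (Matrix.of fun u v =>
        (∑ a, kron2 (d := d) (X a) (C a)) (u, default, s) (v, default, t))
      = ∑ a, C a s t • X a := by
    ext u v
    simp only [Matrix.of_apply, Matrix.sum_apply, kron2, Matrix.smul_apply,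
      smul_eq_mul]
    exact Finset.sum_congr rfl fun a _ => mul_comm _ _
  simp only [ctr2, Matrix.of_apply]
  rw [hof, map_sum]
  simp only [_root_.map_smul, smul_eq_mul, Matrix.sum_apply, Matrix.smul_apply]
  exact Finset.sum_congr rfl fun a _ => mul_comm _ _

theorem hasHermMPO_of_min {Dm : ℕ}
    (ρ : Matrix (Fin d0 × ((i : Fin 0) → Fin (d i)) × Fin dl)
      (Fin d0 × ((i : Fin 0) → Fin (d i)) × Fin dl) ℂ)
    (hρ : ρ.IsHermitian) (hmem : HasMPO 0 d0 dl d ρ Dm)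
    (hmin : ∀ D' < Dm, ¬ HasMPO 0 d0 dl d ρ D') :
    HasHermMPO 0 d0 dl d ρ Dm := by
  classical
  obtain ⟨A, B, hdec⟩ := (hasMPO_zero_iff _ ρ).1 hmem
  have hB : LinearIndependent ℂ B := indepB_of_min ρ A B hdec hmin
  have hA : LinearIndependent ℂ A := indepA_of_min ρ A B hdec hmin
  have hdecH : ρ = ∑ a, kron2 (d := d) ((A a)ᴴ) ((B a)ᴴ) := by
    calc ρ = ρᴴ := hρ.symm
    _ = ∑ a, kron2 (d := d) ((A a)ᴴ) ((B a)ᴴ) := by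
        rw [hdec, Matrix.conjTranspose_sum]
        exact Finset.sum_congr rfl fun a _ => kron2_conjTranspose _ _
  set W := Submodule.span ℂ (Set.range B) with hW
  have hBmem : ∀ a, B a ∈ W := fun a => Submodule.subset_span ⟨a, rfl⟩
  -- star-closure of W
  have hstar : ∀ a, (B a)ᴴ ∈ W := by
    obtain ⟨φ, hφ⟩ := exists_dual_family (indep_conjTranspose A hA)
    intro c
    have h1 : ctr2 (d := d) (φ c) ρ = (B c)ᴴ := by
      rw [hdecH, ctr2_sum]
      simp [hφ]
    have h2 : ctr2 (d := d) (φ c) ρ = ∑ a, (φ c) (A a) • B a := by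
      rw [hdec, ctr2_sum]
    rw [← h1, h2]
    exact Submodule.sum_mem _ fun a _ => Submodule.smul_mem _ _ (hBmem a)
  have hWstar : ∀ w ∈ W, wᴴ ∈ W := by
    intro w hw
    refine Submodule.span_induction (p := fun w _ => wᴴ ∈ W) ?_ ?_ ?_ ?_ hw
    · rintro x ⟨a, rfl⟩
      exact hstar a
    · simp only [Matrix.conjTranspose_zero]
      exact Submodule.zero_mem W
    · intro x y _ _ hx hy
      rw [Matrix.conjTranspose_add]
      exact Submodule.add_mem W hx hy
    · intro c x _ hx
      rw [Matrix.conjTranspose_smul]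
      exact Submodule.smul_mem W _ hx
  -- a Hermitian spanning set of W
  set S : Set (Matrix (Fin dl) (Fin dl) ℂ) := {w | w ∈ W ∧ wᴴ = w} with hS
  have hspanS : Submodule.span ℂ S = W := by
    apply le_antisymm
    · rw [Submodule.span_le]
      intro w hw
      exact hw.1
    · intro w hw
      have hh : (1/2 : ℂ) • (w + wᴴ) ∈ S := by
        refine ⟨Submodule.smul_mem W _ (Submodule.add_mem W hw (hWstar w hw)), ?_⟩
        exact herm_Hpart w
      have hk : (-(Complex.I)/2 : ℂ) • (w - wᴴ) ∈ S := by
        refine ⟨Submodule.smul_mem W _ (Submodule.sub_mem W hw (hWstar w hw)), ?_⟩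
        exact herm_Kpart w
      rw [split_parts w]
      exact Submodule.add_mem _ (Submodule.subset_span hh)
        (Submodule.smul_mem _ _ (Submodule.subset_span hk))
  obtain ⟨bset, hbsub, hbspan, hbindep⟩ := exists_linearIndependent ℂ S
  rw [hspanS] at hbspan
  have hfin : bset.Finite := hbindep.setFinite
  haveI := hfin.fintype
  have hcardb : Fintype.card ↥bset = Dm := by
    have h1 : Module.finrank ℂ ↥(Submodule.span ℂ bset) = bset.toFinset.card :=
      finrank_span_set_eq_card hbindep
    have h2 : Module.finrank ℂ ↥W = Dm := by
      rw [hW, finrank_span_eq_card hB, Fintype.card_fin]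
    rw [hbspan] at h1
    rw [← Set.toFinset_card, ← h1]
    exact h2
  let e : Fin Dm ≃ ↥bset := (Fintype.equivFinOfCardEq hcardb).symm
  set C : Fin Dm → Matrix (Fin dl) (Fin dl) ℂ := fun c => (e c : Matrix _ _ ℂ)
    with hC
  have hCindep : LinearIndependent ℂ C := hbindep.comp e e.injective
  have hCherm : ∀ c, (C c)ᴴ = C c := fun c => (hbsub (e c).2).2
  have hCspan : Submodule.span ℂ (Set.range C) = W := by
    have : Set.range C = bset := by
      rw [hC, show (fun c => ((e c : Matrix (Fin dl) (Fin dl) ℂ)))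
          = Subtype.val ∘ e from rfl,
        Set.range_comp, e.range_eq_univ, Set.image_univ, Subtype.range_coe]
    rw [this, ← hbspan]
  have hBc : ∀ a, ∃ mm : Fin Dm → ℂ, ∑ c, mm c • C c = B a := fun a =>
    (Submodule.mem_span_range_iff_exists_fun ℂ).1 (by rw [hCspan]; exact hBmem a)
  choose mm hmm using hBc
  have hρC : ρ = ∑ c, kron2 (d := d) (∑ a, mm a c • A a) (C c) := by
    rw [hdec]
    calc ∑ a, kron2 (d := d) (A a) (B a)
        = ∑ a, kron2 (d := d) (A a) (∑ c, mm a c • C c) :=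
          Finset.sum_congr rfl fun a _ => by rw [hmm]
      _ = ∑ a, ∑ c, mm a c • kron2 (d := d) (A a) (C c) := by
          refine Finset.sum_congr rfl fun a _ => ?_
          rw [kron2_sum_right]
          exact Finset.sum_congr rfl fun c _ => by rw [kron2_smul_right]
      _ = ∑ c, ∑ a, mm a c • kron2 (d := d) (A a) (C c) := Finset.sum_comm
      _ = ∑ c, kron2 (d := d) (∑ a, mm a c • A a) (C c) := by
          refine Finset.sum_congr rfl fun c _ => ?_
          rw [kron2_sum_left]
          exact Finset.sum_congr rfl fun a _ => by rw [kron2_smul_left]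
  set A' : Fin Dm → Matrix (Fin d0) (Fin d0) ℂ := fun c => ∑ a, mm a c • A a
    with hA'
  have hρCH : ρ = ∑ c, kron2 (d := d) ((A' c)ᴴ) (C c) := by
    calc ρ = ρᴴ := hρ.symm
    _ = ∑ c, kron2 (d := d) ((A' c)ᴴ) ((C c)ᴴ) := by
        rw [hρC, Matrix.conjTranspose_sum]
        exact Finset.sum_congr rfl fun c _ => kron2_conjTranspose _ _
    _ = ∑ c, kron2 (d := d) ((A' c)ᴴ) (C c) := by
        exact Finset.sum_congr rfl fun c _ => by rw [hCherm]
  have hA'h : ∀ c, (A' c)ᴴ = A' c :=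
    kron2_cancel_eq _ _ C hCindep (hρCH.symm.trans hρC)
  exact (hasHermMPO_zero_iff Dm ρ).2 ⟨A', C, fun c => hA'h c,
    fun c => hCherm c, hρC⟩

end Core0
/-- On `n + 2` sites:  `osr ρ ≤ hosr ρ ≤ 2 ^ ((n+2)-1) * osr ρ`, and for two
sites (`n = 0`) one has `hosr ρ = osr ρ`. -/
theorem stmt_13 (n d0 dl : ℕ) (d : Fin n → ℕ)
    (ρ : Matrix (Fin d0 × ((i : Fin n) → Fin (d i)) × Fin dl)
      (Fin d0 × ((i : Fin n) → Fin (d i)) × Fin dl) ℂ)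
    (hρ : ρ.IsHermitian) :
    osr n d0 dl d ρ ≤ hosr n d0 dl d ρ ∧
    hosr n d0 dl d ρ ≤ 2 ^ (n + 1) * osr n d0 dl d ρ ∧
    (n = 0 → hosr n d0 dl d ρ = osr n d0 dl d ρ) := by
  have hne : Set.Nonempty {D | HasMPO n d0 dl d ρ D} := exists_hasMPO ρ
  have hosrmem : HasMPO n d0 dl d ρ (osr n d0 dl d ρ) := Nat.sInf_mem hne
  have hherm : HasHermMPO n d0 dl d ρ (2 ^ (n + 1) * osr n d0 dl d ρ) :=
    hasHermMPO_of_hasMPO ρ hρ hosrmem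
  have h2 : hosr n d0 dl d ρ ≤ 2 ^ (n + 1) * osr n d0 dl d ρ :=
    Nat.sInf_le hherm
  have hhne : Set.Nonempty {D | HasHermMPO n d0 dl d ρ D} := ⟨_, hherm⟩
  have hhosrmem : HasHermMPO n d0 dl d ρ (hosr n d0 dl d ρ) := Nat.sInf_mem hhne
  have h1 : osr n d0 dl d ρ ≤ hosr n d0 dl d ρ := by
    obtain ⟨A0, Am, Al, _, _, _, he⟩ := hhosrmem
    exact Nat.sInf_le ⟨A0, Am, Al, he⟩
  refine ⟨h1, h2, ?_⟩
  rintro rfl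
  exact le_antisymm
    (Nat.sInf_le (hasHermMPO_of_min ρ hρ hosrmem
      (fun D' h => Nat.notMem_of_lt_sInf h))) h1
end

section
/- Let ρ ∈ M_{d1} ⊗ M_{d2} be positive semidefinite with ρ = A ⊗ B for some complex matrices A ∈ M_{d1}, B ∈ M_{d2}, both nonzero. Then either both A and B are scalar multiples of positive semidefinite matrices with the same sign, i.e. there exist positive semidefinite σ ∈ PSD_{d1}, τ ∈ PSD_{d2} with ρ = σ ⊗ τ. In particular osr(ρ) = 1 implies hosr(ρ) = 1 and sep-rank(ρ) = 1. -/
open scoped Kronecker ComplexOrder InnerProductSpace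
open Matrix

private lemma quad_zero {n : ℕ} (N : Matrix (Fin n) (Fin n) ℂ)
    (h : ∀ x : Fin n → ℂ, star x ⬝ᵥ N *ᵥ x = 0) : N = 0 := by
  have h2 : ∀ x : EuclideanSpace ℂ (Fin n), ⟪N.toEuclideanLin x, x⟫_ℂ = 0 := by
    intro x
    obtain ⟨y, rfl⟩ := (WithLp.equiv 2 (Fin n → ℂ)).symm.surjective x
    rw [← inner_conj_symm]
    rw [WithLp.equiv_symm_apply, toEuclideanLin_toLp, EuclideanSpace.inner_toLp_toLp, toLin'_apply,
      dotProduct_comm, h y, map_zero]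
  have := (inner_map_self_eq_zero N.toEuclideanLin).mp h2
  exact (LinearEquiv.map_eq_zero_iff Matrix.toEuclideanLin).mp this

private lemma psd_of_quad {n : ℕ} (M : Matrix (Fin n) (Fin n) ℂ)
    (h : ∀ x : Fin n → ℂ, 0 ≤ star x ⬝ᵥ M *ᵥ x) : M.PosSemidef := by
  refine PosSemidef.of_dotProduct_mulVec_nonneg ?_ h
  rw [isHermitian_iff_isSymmetric, LinearMap.isSymmetric_iff_inner_map_self_real]
  intro v
  obtain ⟨y, rfl⟩ := (WithLp.equiv 2 (Fin n → ℂ)).symm.surjective v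
  have hq : ⟪(WithLp.equiv 2 (Fin n → ℂ)).symm y,
      M.toEuclideanLin ((WithLp.equiv 2 (Fin n → ℂ)).symm y)⟫_ℂ = star y ⬝ᵥ M *ᵥ y := by
    rw [WithLp.equiv_symm_apply, toEuclideanLin_toLp, EuclideanSpace.inner_toLp_toLp, toLin'_apply, dotProduct_comm]
  have hreal : (starRingEnd ℂ) (star y ⬝ᵥ M *ᵥ y) = star y ⬝ᵥ M *ᵥ y := by
    have := h y
    rw [Complex.le_def] at this
    rw [Complex.conj_eq_iff_im]
    simpa using this.2.symm
  have e : ⟪M.toEuclideanLin ((WithLp.equiv 2 (Fin n → ℂ)).symm y),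
      (WithLp.equiv 2 (Fin n → ℂ)).symm y⟫_ℂ = (starRingEnd ℂ) (star y ⬝ᵥ M *ᵥ y) := by
    rw [← inner_conj_symm, hq]
  rw [e, Complex.conj_conj]
  exact hreal.symm

private lemma quad_kron {d1 d2 : ℕ} (A : Matrix (Fin d1) (Fin d1) ℂ)
    (B : Matrix (Fin d2) (Fin d2) ℂ) (v : Fin d1 → ℂ) (w : Fin d2 → ℂ) :
    star (fun p : Fin d1 × Fin d2 => v p.1 * w p.2) ⬝ᵥ
        (A ⊗ₖ B) *ᵥ (fun p => v p.1 * w p.2)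
      = (star v ⬝ᵥ A *ᵥ v) * (star w ⬝ᵥ B *ᵥ w) := by
  simp only [dotProduct, mulVec, kroneckerMap_apply, Pi.star_apply, star_mul',
    Fintype.sum_prod_type]
  rw [Finset.sum_mul_sum]
  apply Finset.sum_congr rfl; intro i _
  apply Finset.sum_congr rfl; intro j _
  rw [mul_mul_mul_comm, Finset.sum_mul_sum]
  simp only [Finset.mul_sum]
  apply Finset.sum_congr rfl; intro k _
  apply Finset.sum_congr rfl; intro l _
  ring

theorem stmt_15 (d1 d2 : ℕ)
    (A : Matrix (Fin d1) (Fin d1) ℂ) (B : Matrix (Fin d2) (Fin d2) ℂ)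
    (hA : A ≠ 0) (hB : B ≠ 0) (hρ : (A ⊗ₖ B).PosSemidef) :
    ∃ (σ : Matrix (Fin d1) (Fin d1) ℂ) (τ : Matrix (Fin d2) (Fin d2) ℂ),
      σ.PosSemidef ∧ τ.PosSemidef ∧
      -- A and B are (same-sign) scalar multiples of psd matrices:
      (∃ c : ℂ, c ≠ 0 ∧ A = c • σ ∧ B = c⁻¹ • τ) ∧
      A ⊗ₖ B = σ ⊗ₖ τ := by
  have key : ∀ (v : Fin d1 → ℂ) (w : Fin d2 → ℂ),
      0 ≤ (star v ⬝ᵥ A *ᵥ v) * (star w ⬝ᵥ B *ᵥ w) := by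
    intro v w
    rw [← quad_kron]
    exact hρ.dotProduct_mulVec_nonneg _
  obtain ⟨v0, ha⟩ : ∃ v, star v ⬝ᵥ A *ᵥ v ≠ 0 := by
    by_contra h; push_neg at h; exact hA (quad_zero A h)
  obtain ⟨w0, hb⟩ : ∃ w, star w ⬝ᵥ B *ᵥ w ≠ 0 := by
    by_contra h; push_neg at h; exact hB (quad_zero B h)
  set a := star v0 ⬝ᵥ A *ᵥ v0 with ha_def
  set b := star w0 ⬝ᵥ B *ᵥ w0 with hb_def
  have hr : 0 ≤ a * b := key v0 w0
  have hrne : a * b ≠ 0 := mul_ne_zero ha hb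
  rw [Complex.le_def] at hr
  have him : (a * b).im = 0 := by
    have := hr.2; rw [Complex.zero_im] at this; exact this.symm
  have hre : 0 < (a * b).re := by
    have h1 : 0 ≤ (a * b).re := by have := hr.1; rwa [Complex.zero_re] at this
    rcases h1.lt_or_eq with h | h
    · exact h
    · exact absurd (Complex.ext (by simpa using h.symm) (by simpa using him)) hrne
  have hcoe : ((a * b).re : ℂ) = a * b := by
    apply Complex.ext <;> simp [him]
  set s : ℝ := Real.sqrt (a * b).re with hs_def
  have hs : 0 < s := Real.sqrt_pos.mpr hre
  have hss : (s : ℂ) * s = ((a * b).re : ℂ) := by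
    rw [← Complex.ofReal_mul]
    norm_cast
    exact Real.mul_self_sqrt hre.le
  have hsne : (s : ℂ) ≠ 0 := by exact_mod_cast hs.ne'
  refine ⟨(b / s) • A, (a / s) • B, ?_, ?_, ⟨(s : ℂ) / b, ?_, ?_, ?_⟩, ?_⟩
  · apply psd_of_quad
    intro x
    rw [smul_mulVec, dotProduct_smul, smul_eq_mul]
    have h1 : 0 ≤ (star x ⬝ᵥ A *ᵥ x) * b := key x w0
    have h2 : (b / ↑s) * (star x ⬝ᵥ A *ᵥ x) = ((s⁻¹ : ℝ) : ℂ) * ((star x ⬝ᵥ A *ᵥ x) * b) := by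
      push_cast; field_simp; try ring
    rw [h2]
    exact mul_nonneg (by rw [Complex.le_def]; simp [inv_nonneg.mpr hs.le]) h1
  · apply psd_of_quad
    intro x
    rw [smul_mulVec, dotProduct_smul, smul_eq_mul]
    have h1 : 0 ≤ a * (star x ⬝ᵥ B *ᵥ x) := key v0 x
    have h2 : (a / ↑s) * (star x ⬝ᵥ B *ᵥ x) = ((s⁻¹ : ℝ) : ℂ) * (a * (star x ⬝ᵥ B *ᵥ x)) := by
      push_cast; field_simp; try ring
    rw [h2]
    exact mul_nonneg (by rw [Complex.le_def]; simp [inv_nonneg.mpr hs.le]) h1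
  · exact div_ne_zero hsne hb
  · rw [smul_smul]
    have : (s : ℂ) / b * (b / s) = 1 := by field_simp
    rw [this, one_smul]
  · rw [smul_smul]
    have hcinv : ((s : ℂ) / b)⁻¹ = b / s := by
      rw [inv_div]
    rw [hcinv]
    have : b / (s : ℂ) * (a / s) = 1 := by
      rw [div_mul_div_comm, mul_comm b a, hss, hcoe, div_self hrne]
    rw [this, one_smul]
  · rw [smul_kronecker, kronecker_smul, smul_smul]
    have : b / (s : ℂ) * (a / s) = 1 := by
      rw [div_mul_div_comm, mul_comm b a, hss, hcoe, div_self hrne]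
    rw [this, one_smul]
end

section
/- Let C ⊆ ℝ^m be a closed salient convex cone with nonempty interior that is a simplex cone. Then the minimal operator system over C coincides with the free spectrahedron it generates: for any ℝ-linearly independent Hermitian matrices P₁,…,P_m with FS₁(P₁,…,P_m) = C, one has FS_r(P₁,…,P_m) = C_r^min for every r ≥ 1, where C_r^min = { Σ_j c_j ⊗ H_j : c_j ∈ C, H_j ∈ PSD_r }. Equivalently: if C = cone{v₁,…,v_m} with v₁,…,v_m linearly independent, then any tuple (B₁,…,B_m) of Hermitian r × r matrices satisfying Σ_i P_i ⊗ B_i ⪰ 0 can be written as Σ_{j=1}^m v_j ⊗ H_j with H_j ∈ PSD_r. -/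
open scoped Kronecker ComplexOrder
open Matrix

lemma mysum_mulVec {ι n' : Type*} [Fintype ι] [Fintype n'] (M : ι → Matrix n' n' ℂ)
    (w : n' → ℂ) : (∑ i, M i) *ᵥ w = ∑ i, M i *ᵥ w := by
  ext k
  simp only [mulVec, dotProduct, Matrix.sum_apply, Finset.sum_mul, Finset.sum_apply]
  exact Finset.sum_comm

lemma mydot_sum {ι n' : Type*} [Fintype ι] [Fintype n'] (u : n' → ℂ) (f : ι → n' → ℂ) :
    u ⬝ᵥ (∑ i, f i) = ∑ i, u ⬝ᵥ f i := by
  simp only [dotProduct, Finset.sum_apply, Finset.mul_sum]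
  exact Finset.sum_comm

theorem kronquad {s r : ℕ} (Pm : Matrix (Fin s) (Fin s) ℂ) (Bm : Matrix (Fin r) (Fin r) ℂ)
    (y : Fin s → ℂ) (x : Fin r → ℂ) :
    star (fun p : Fin s × Fin r => y p.1 * x p.2) ⬝ᵥ ((Pm ⊗ₖ Bm) *ᵥ fun p => y p.1 * x p.2)
      = (star y ⬝ᵥ Pm *ᵥ y) * (star x ⬝ᵥ Bm *ᵥ x) := by
  simp only [dotProduct, mulVec, Matrix.kroneckerMap_apply, Fintype.sum_prod_type,
    Pi.star_apply, star_mul']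
  rw [Finset.sum_mul_sum]
  refine Finset.sum_congr rfl fun i1 _ => ?_
  refine Finset.sum_congr rfl fun i2 _ => ?_
  rw [mul_mul_mul_comm, Finset.sum_mul_sum]
  conv_rhs => rw [Finset.mul_sum]
  rw [Finset.mul_sum]
  refine Finset.sum_congr rfl fun j1 _ => ?_
  conv_rhs => rw [Finset.mul_sum]
  rw [Finset.mul_sum]
  refine Finset.sum_congr rfl fun j2 _ => ?_
  ring

theorem herm_quad_real {r : ℕ} {A : Matrix (Fin r) (Fin r) ℂ} (hA : A.IsHermitian)
    (x : Fin r → ℂ) : ((star x ⬝ᵥ A *ᵥ x).re : ℂ) = star x ⬝ᵥ A *ᵥ x := by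
  rw [← Complex.conj_eq_iff_re, ← Complex.star_def]
  calc star (star x ⬝ᵥ A *ᵥ x) = star (A *ᵥ x) ⬝ᵥ star (star x) := by
        rw [star_dotProduct_star]
      _ = star (A *ᵥ x) ⬝ᵥ x := by rw [star_star]
      _ = star x ᵥ* Aᴴ ⬝ᵥ x := by rw [star_mulVec]
      _ = star x ⬝ᵥ Aᴴ *ᵥ x := by rw [dotProduct_mulVec]
      _ = star x ⬝ᵥ A *ᵥ x := by rw [hA.eq]

theorem stmt_17 (m s r : ℕ)
    (P : Fin m → Matrix (Fin s) (Fin s) ℂ)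
    (hP : ∀ i, (P i).IsHermitian) (hPind : LinearIndependent ℝ P)
    (v : Fin m → Fin m → ℝ) (hv : LinearIndependent ℝ v)
    -- C = FS₁(P₁,…,P_m) is the simplex cone generated by v₁,…,v_m :
    (hC : ∀ b : Fin m → ℝ, (∑ i, b i • P i).PosSemidef ↔
      ∃ c : Fin m → ℝ, (∀ j, 0 ≤ c j) ∧ b = ∑ j, c j • v j)
    (B : Fin m → Matrix (Fin r) (Fin r) ℂ)
    (hB : ∀ i, (B i).IsHermitian)
    (hpsd : (∑ i, P i ⊗ₖ B i).PosSemidef) :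
    ∃ H : Fin m → Matrix (Fin r) (Fin r) ℂ,
      (∀ j, (H j).PosSemidef) ∧ ∀ i, B i = ∑ j, v j i • H j := by
  classical
  rcases Nat.eq_zero_or_pos m with hm | hm
  · subst hm
    exact ⟨Fin.elim0, fun j => j.elim0, fun i => i.elim0⟩
  haveI : Nonempty (Fin m) := ⟨⟨0, hm⟩⟩
  have hcard : Fintype.card (Fin m) = Module.finrank ℝ (Fin m → ℝ) := by simp
  let bV : Module.Basis (Fin m) ℝ (Fin m → ℝ) := basisOfLinearIndependentOfCardEqFinrank hv hcard
  have hbV : ⇑bV = v := coe_basisOfLinearIndependentOfCardEqFinrank hv hcard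
  let e : Module.Basis (Fin m) ℝ (Fin m → ℝ) := Pi.basisFun ℝ (Fin m)
  let V : Matrix (Fin m) (Fin m) ℝ := e.toMatrix ⇑bV
  haveI : Invertible V := Module.Basis.invertibleToMatrix e bV
  have hV : ∀ i k, V i k = v k i := by
    intro i k
    simp [V, Module.Basis.toMatrix_apply, hbV, e]
  set W : Matrix (Fin m) (Fin m) ℝ := ⅟V with hW
  have hWV : W * V = 1 := invOf_mul_self V
  have hVW : V * W = 1 := mul_invOf_self V
  refine ⟨fun j => ∑ i, W j i • B i, ?_, ?_⟩
  · intro j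
    refine posSemidef_iff_dotProduct_mulVec.mpr ⟨?_, ?_⟩
    · show (∑ i, W j i • B i)ᴴ = _
      rw [conjTranspose_sum]
      refine Finset.sum_congr rfl fun i _ => ?_
      rw [conjTranspose_smul, star_trivial, (hB i).eq]
    · intro x
      set b : Fin m → ℝ := fun i => (star x ⬝ᵥ B i *ᵥ x).re with hbdef
      have hbr : ∀ i, ((b i : ℝ) : ℂ) = star x ⬝ᵥ B i *ᵥ x := fun i =>
        herm_quad_real (hB i) x
      have hbP : (∑ i, b i • P i).PosSemidef := by
        refine posSemidef_iff_dotProduct_mulVec.mpr ⟨?_, ?_⟩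
        · show (∑ i, b i • P i)ᴴ = _
          rw [conjTranspose_sum]
          refine Finset.sum_congr rfl fun i _ => ?_
          rw [conjTranspose_smul, star_trivial, (hP i).eq]
        · intro y
          have key : star y ⬝ᵥ (∑ i, b i • P i) *ᵥ y
              = star (fun p : Fin s × Fin r => y p.1 * x p.2)
                ⬝ᵥ ((∑ i, P i ⊗ₖ B i) *ᵥ fun p => y p.1 * x p.2) := by
            rw [mysum_mulVec, mydot_sum, mysum_mulVec, mydot_sum]
            refine Finset.sum_congr rfl fun i _ => ?_
            rw [kronquad (P i) (B i) y x, ← hbr i]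
            rw [Matrix.smul_mulVec, dotProduct_smul]
            rw [mul_comm]
            simp [Complex.real_smul]
          rw [key]
          exact hpsd.dotProduct_mulVec_nonneg _
      obtain ⟨c, hc, hcb⟩ := (hC b).1 hbP
      have hbi : ∀ i, b i = ∑ k, c k * v k i := by
        intro i
        rw [hcb]
        simp [Finset.sum_apply]
      have hquad : star x ⬝ᵥ (∑ i, W j i • B i) *ᵥ x = ((c j : ℝ) : ℂ) := by
        rw [mysum_mulVec, mydot_sum]
        have h1 : ∀ i, star x ⬝ᵥ (W j i • B i) *ᵥ x = ((W j i * b i : ℝ) : ℂ) := by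
          intro i
          rw [Matrix.smul_mulVec, dotProduct_smul, ← hbr i]
          push_cast
          rw [Complex.real_smul]
        simp_rw [h1]
        rw [← Complex.ofReal_sum]
        congr 1
        calc ∑ i, W j i * b i = ∑ i, ∑ k, c k * (W j i * V i k) := by
              refine Finset.sum_congr rfl fun i _ => ?_
              rw [hbi i, Finset.mul_sum]
              refine Finset.sum_congr rfl fun k _ => ?_
              rw [hV]; ring
          _ = ∑ k, c k * ∑ i, W j i * V i k := by
              rw [Finset.sum_comm]
              refine Finset.sum_congr rfl fun k _ => ?_
              rw [Finset.mul_sum]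
          _ = ∑ k, c k * (W * V) j k := by
              refine Finset.sum_congr rfl fun k _ => ?_
              rw [Matrix.mul_apply]
          _ = c j := by
              rw [hWV]
              simp [Matrix.one_apply]
      rw [hquad]
      exact_mod_cast Complex.zero_le_real.2 (hc j)
  · intro i
    have key : ∑ j, v j i • (∑ k, W j k • B k) = ∑ k, ((V * W) i k) • B k := by
      simp_rw [Finset.smul_sum, smul_smul]
      rw [Finset.sum_comm]
      refine Finset.sum_congr rfl fun k _ => ?_
      rw [← Finset.sum_smul, Matrix.mul_apply]
      congr 1
      exact Finset.sum_congr rfl fun j _ => by rw [hV]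
    rw [key, hVW]
    simp [Matrix.one_apply, ite_smul]
end
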